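/- limsup_{n→∞} 2·b(n) / (2n)^{log₃(√2+1)} = 1 (Northshield's conjecture). -/
import Mathlib

open Real Filter Topology

private lemma pow5_le_rpow45 {c u : ℝ} (hc : 0 ≤ c) (hu : 0 ≤ u) (h : c ^ 5 ≤ u ^ 4) :
    c ≤ u ^ ((4:ℝ)/5) := by
  have h1 : c = ((c ^ (5:ℕ)) : ℝ) ^ ((1:ℝ)/5) := by
    rw [← Real.rpow_natCast c 5, ← Real.rpow_mul hc]
    norm_num
  have h2 : ((u ^ (4:ℕ)) : ℝ) ^ ((1:ℝ)/5) = u ^ ((4:ℝ)/5) := by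
    rw [← Real.rpow_natCast u 4, ← Real.rpow_mul hu]
    norm_num
  rw [h1, ← h2]
  exact Real.rpow_le_rpow (by positivity) h (by norm_num)

private lemma rpow45_le_pow5 {u c : ℝ} (hu : 0 ≤ u) (hc : 0 ≤ c) (h : u ^ 4 ≤ c ^ 5) :
    u ^ ((4:ℝ)/5) ≤ c := by
  have h1 : c = ((c ^ (5:ℕ)) : ℝ) ^ ((1:ℝ)/5) := by
    rw [← Real.rpow_natCast c 5, ← Real.rpow_mul hc]
    norm_num
  have h2 : ((u ^ (4:ℕ)) : ℝ) ^ ((1:ℝ)/5) = u ^ ((4:ℝ)/5) := by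
    rw [← Real.rpow_natCast u 4, ← Real.rpow_mul hu]
    norm_num
  rw [h1, ← h2]
  exact Real.rpow_le_rpow (by positivity) h (by norm_num)

private lemma pow5_le_rpow35 {c v : ℝ} (hc : 0 ≤ c) (hv : 0 ≤ v) (h : c ^ 5 ≤ v ^ 3) :
    c ≤ v ^ ((3:ℝ)/5) := by
  have h1 : c = ((c ^ (5:ℕ)) : ℝ) ^ ((1:ℝ)/5) := by
    rw [← Real.rpow_natCast c 5, ← Real.rpow_mul hc]
    norm_num
  have h2 : ((v ^ (3:ℕ)) : ℝ) ^ ((1:ℝ)/5) = v ^ ((3:ℝ)/5) := by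
    rw [← Real.rpow_natCast v 3, ← Real.rpow_mul hv]
    norm_num
  rw [h1, ← h2]
  exact Real.rpow_le_rpow (by positivity) h (by norm_num)

private def E3 : ℕ → ℕ
  | 0 => 0
  | k+1 => 3 * E3 k + 1

private lemma E3_pow (k : ℕ) : 2 * E3 k + 1 = 3 ^ k := by
  induction k with
  | zero => simp [E3]
  | succ k ih => simp only [E3, pow_succ]; omega

private lemma E3_ge (k : ℕ) : k ≤ E3 k := by
  induction k with
  | zero => simp [E3]
  | succ k ih => simp only [E3]; omega

set_option maxHeartbeats 3200000 in
theorem northshield_conjecture (b : ℕ → ℝ)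
    (hb0 : b 0 = 0) (hb1 : b 1 = 1)
    (hrec0 : ∀ n : ℕ, b (3 * n) = b n)
    (hrec1 : ∀ n : ℕ, b (3 * n + 1) = Real.sqrt 2 * b n + b (n + 1))
    (hrec2 : ∀ n : ℕ, b (3 * n + 2) = b n + Real.sqrt 2 * b (n + 1)) :
    Filter.limsup
      (fun n : ℕ => 2 * b n / (2 * (n : ℝ)) ^ Real.logb 3 (Real.sqrt 2 + 1))
      Filter.atTop = 1 := by
  set s : ℝ := Real.sqrt 2 with hs_def
  set a : ℝ := Real.logb 3 (s + 1) with ha_def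
  have hs1 : (0:ℝ) ≤ s := Real.sqrt_nonneg 2
  have hss : s * s = 2 := Real.mul_self_sqrt (by norm_num)
  have hslb : 1.414 ≤ s := by nlinarith [hss, hs1]
  have hsub : s ≤ 1.415 := by nlinarith [hss, hs1]
  have h3a : (3:ℝ) ^ a = s + 1 := by
    rw [ha_def]
    exact Real.rpow_logb (by norm_num) (by norm_num) (by linarith)
  have h3na : (3:ℝ) ^ (-a) = s - 1 := by
    rw [Real.rpow_neg (by norm_num), h3a]
    rw [inv_eq_one_div, div_eq_iff (by linarith)]
    nlinarith [hss]
  have ha45 : (4:ℝ)/5 ≤ a := by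
    rw [ha_def, Real.le_logb_iff_rpow_le (by norm_num) (by linarith)]
    apply rpow45_le_pow5 (by norm_num) (by linarith)
    have h5 : (s+1)^5 = 41 + 29*s := by linear_combination (s^3+5*s^2+12*s+20)*hss
    rw [h5]; norm_num; linarith
  have ha1 : a ≤ 1 := by
    rw [ha_def, Real.logb_le_iff_le_rpow (by norm_num) (by linarith)]
    rw [Real.rpow_one]; linarith
  have ha0 : (0:ℝ) ≤ a := by linarith
  -- generic rpow facts
  have hmul3 : ∀ t : ℝ, 0 ≤ t → (3*t) ^ a = (s+1) * t ^ a := by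
    intro t ht; rw [Real.mul_rpow (by norm_num) ht, h3a]
  have hmul3n : ∀ t : ℝ, 0 ≤ t → (3*t) ^ (-a) = (s-1) * t ^ (-a) := by
    intro t ht; rw [Real.mul_rpow (by norm_num) ht, h3na]
  have hrpos : ∀ t : ℝ, 0 < t → 0 < t ^ a := fun t ht => Real.rpow_pos_of_pos ht a
  have hrnpos : ∀ t : ℝ, 0 < t → 0 < t ^ (-a) := fun t ht => Real.rpow_pos_of_pos ht _
  have hanti : ∀ t1 t2 : ℝ, 0 < t1 → t1 ≤ t2 → t2 ^ (-a) ≤ t1 ^ (-a) := by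
    intro t1 t2 h1 h12
    exact Real.rpow_le_rpow_of_nonpos h1 h12 (by linarith)
  have hmono : ∀ t1 t2 : ℝ, 1 ≤ t1 → t1 ≤ t2 → t1^a - t1^(-a) ≤ t2^a - t2^(-a) := by
    intro t1 t2 h1 h12
    have e1 : t1 ^ a ≤ t2 ^ a := Real.rpow_le_rpow (by linarith) h12 ha0
    have e2 : t2 ^ (-a) ≤ t1 ^ (-a) := hanti t1 t2 (by linarith) h12
    linarith
  have hle1 : ∀ t : ℝ, 1 ≤ t → t ^ (-a) ≤ 1 := fun t ht =>
    Real.rpow_le_one_of_one_le_of_nonpos ht (by linarith)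
  have hta : ∀ t : ℝ, 1 ≤ t → t ^ a ≤ t := by
    intro t ht
    calc t ^ a ≤ t ^ (1:ℝ) := Real.rpow_le_rpow_of_exponent_le ht ha1
    _ = t := Real.rpow_one t
  have hnum : ∀ t c : ℝ, 0 ≤ c → 1 ≤ t → c ^ 5 ≤ t ^ 4 → c ≤ t ^ a := by
    intro t c hc ht h
    exact le_trans (pow5_le_rpow45 hc (by linarith) h)
      (Real.rpow_le_rpow_of_exponent_le ht ha45)
  have hinvle : ∀ t c : ℝ, 0 ≤ t → 0 < c → c ≤ t ^ a → t ^ (-a) ≤ c⁻¹ := by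
    intro t c ht hc h
    rw [Real.rpow_neg ht]
    exact inv_anti₀ hc h
  -- nonnegativity of b
  have hbnn : ∀ n : ℕ, 0 ≤ b n := by
    intro n
    induction n using Nat.strong_induction_on with
    | _ n ih =>
      rcases lt_or_ge n 3 with h3 | h3
      · interval_cases n
        · rw [hb0]
        · rw [hb1]; norm_num
        · have h := hrec2 0
          norm_num [hb0, hb1] at h
          rw [h]; exact hs1
      · obtain ⟨q, r, hrlt, rfl⟩ : ∃ q r, r < 3 ∧ n = 3*q + r :=
          ⟨n/3, n%3, Nat.mod_lt _ (by norm_num), (Nat.div_add_mod n 3).symm⟩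
        have hq1 : 1 ≤ q := by omega
        have h1 : 0 ≤ b q := ih q (by omega)
        have h2 : 0 ≤ b (q+1) := ih (q+1) (by omega)
        interval_cases r
        · rw [show 3*q+0 = 3*q from by omega, hrec0 q]; exact h1
        · rw [hrec1 q]; positivity
        · rw [hrec2 q]; positivity
  -- small values of b
  have hb2 : b 2 = s := by
    have h := hrec2 0; norm_num [hb0, hb1] at h; exact h
  have hb3 : b 3 = 1 := by
    have h := hrec0 1; norm_num at h; rw [h, hb1]
  have hb4 : b 4 = 2*s := by
    have h := hrec1 1; norm_num [hb1, hb2] at h; rw [h]; ring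
  have hb5 : b 5 = 3 := by
    have h := hrec2 1; norm_num [hb1, hb2] at h; rw [h]; nlinarith [hss]
  have hb6 : b 6 = s := by
    have h := hrec0 2; norm_num at h; rw [h, hb2]
  -- exact rpow values
  have h9a : (9:ℝ) ^ a = (s+1)*(s+1) := by
    have h := hmul3 3 (by norm_num); norm_num at h; rw [h, h3a]
  have h9na : (9:ℝ) ^ (-a) = (s-1)*(s-1) := by
    have h := hmul3n 3 (by norm_num); norm_num at h; rw [h, h3na]
  have h27a : (27:ℝ) ^ a = (s+1)*((s+1)*(s+1)) := by
    have h := hmul3 9 (by norm_num); norm_num at h; rw [h, h9a]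
  have h27na : (27:ℝ) ^ (-a) = (s-1)*((s-1)*(s-1)) := by
    have h := hmul3n 9 (by norm_num); norm_num at h; rw [h, h9na]
  -- numeric rpow bounds
  have h5a : (17:ℝ)/5 ≤ (5:ℝ)^a := hnum 5 (17/5) (by norm_num) (by norm_num) (by norm_num)
  have h5n : (5:ℝ)^(-a) ≤ 5/17 := by
    have := hinvle 5 (17/5) (by norm_num) (by norm_num) h5a; rw [show ((17:ℝ)/5)⁻¹ = 5/17 by norm_num] at this; exact this
  have h7a : (237:ℝ)/50 ≤ (7:ℝ)^a := hnum 7 (237/50) (by norm_num) (by norm_num) (by norm_num)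
  have h7n : (7:ℝ)^(-a) ≤ 50/237 := by
    have := hinvle 7 (237/50) (by norm_num) (by norm_num) h7a; rw [show ((237:ℝ)/50)⁻¹ = 50/237 by norm_num] at this; exact this
  have h15a : (8:ℝ) ≤ (15:ℝ)^a := hnum 15 8 (by norm_num) (by norm_num) (by norm_num)
  have h15n : (15:ℝ)^(-a) ≤ 1/8 := by
    have := hinvle 15 8 (by norm_num) (by norm_num) h15a; rw [show ((8:ℝ))⁻¹ = 1/8 by norm_num] at this; exact this
  have h21a : (11:ℝ) ≤ (21:ℝ)^a := hnum 21 11 (by norm_num) (by norm_num) (by norm_num)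
  have h21n : (21:ℝ)^(-a) ≤ 1/11 := by
    have := hinvle 21 11 (by norm_num) (by norm_num) h21a; rw [show ((11:ℝ))⁻¹ = 1/11 by norm_num] at this; exact this
  have h11a : (34:ℝ)/5 ≤ (11:ℝ)^a := hnum 11 (34/5) (by norm_num) (by norm_num) (by norm_num)
  have h11n : (11:ℝ)^(-a) ≤ 5/34 := by
    have := hinvle 11 (34/5) (by norm_num) (by norm_num) h11a; rw [show ((34:ℝ)/5)⁻¹ = 5/34 by norm_num] at this; exact this
  have h33a : (16:ℝ) ≤ (33:ℝ)^a := hnum 33 16 (by norm_num) (by norm_num) (by norm_num)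
  have h33n : (33:ℝ)^(-a) ≤ 1/16 := by
    have := hinvle 33 16 (by norm_num) (by norm_num) h33a; rw [show ((16:ℝ))⁻¹ = 1/16 by norm_num] at this; exact this
  -- key analytic lemma for the digit-2 step
  have hvlem : ∀ v : ℝ, 15 ≤ v → v ^ a + v ^ (-a) ≤ (v+2) ^ a - (v+2) ^ (-a) := by
    intro v hv
    have hv0 : (0:ℝ) < v := by linarith
    have hv1 : (1:ℝ) ≤ v := by linarith
    have hPpos : 0 < v ^ a := hrpos v hv0
    have h1 : (v+2) ^ (-a) ≤ v ^ (-a) := hanti v (v+2) hv0 (by linarith)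
    have h2 : (1 + 1/(2*v))^2 ≤ 1 + 2/v := by
      have hv0' : v ≠ 0 := by linarith
      have e : (1 + 2/v) - (1 + 1/(2*v))^2 = (4*v - 1)/(4*v^2) := by
        field_simp
        ring
      linarith [div_nonneg (show (0:ℝ) ≤ 4*v-1 by linarith)
        (show (0:ℝ) ≤ 4*v^2 by positivity), e]
    have h3 : 1 + 1/(2*v) ≤ (1 + 2/v) ^ ((1:ℝ)/2) := by
      rw [← Real.sqrt_eq_rpow]
      exact (Real.le_sqrt (by positivity) (by positivity)).2 h2
    have h4 : (1 + 2/v) ^ ((1:ℝ)/2) ≤ (1 + 2/v) ^ a := by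
      have h2v : (0:ℝ) < 2/v := by positivity
      exact Real.rpow_le_rpow_of_exponent_le (by linarith) (by linarith)
    have h5 : v ^ a * (1 + 2/v) ^ a = (v+2) ^ a := by
      rw [← Real.mul_rpow hv0.le (by positivity)]
      congr 1
      field_simp
    have h6 : (4:ℝ) ≤ v ^ ((3:ℝ)/5) := by
      apply pow5_le_rpow35 (by norm_num) hv0.le
      calc (4:ℝ)^5 = 1024 := by norm_num
      _ ≤ 3375 := by norm_num
      _ = 15^3 := by norm_num
      _ ≤ v^3 := pow_le_pow_left₀ (by norm_num) hv 3
    have h7 : v * 4 ≤ v ^ a * v ^ a := by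
      have e1 : v ^ a * v ^ a = v ^ (a + a) := (Real.rpow_add hv0 a a).symm
      have e2 : v ^ ((1:ℝ) + 3/5) ≤ v ^ (a+a) :=
        Real.rpow_le_rpow_of_exponent_le hv1 (by linarith)
      have e3 : v ^ ((1:ℝ) + 3/5) = v * v ^ ((3:ℝ)/5) := by
        rw [Real.rpow_add hv0, Real.rpow_one]
      rw [e1]
      calc v * 4 ≤ v * v ^ ((3:ℝ)/5) :=
            mul_le_mul_of_nonneg_left h6 (by linarith)
      _ = v ^ ((1:ℝ) + 3/5) := e3.symm
      _ ≤ v ^ (a+a) := e2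
    have h8 : 2 * v ^ (-a) ≤ v ^ a / (2*v) := by
      rw [Real.rpow_neg hv0.le]
      have e : 2 / v^a ≤ v^a/(2*v) := by
        rw [div_le_div_iff₀ hPpos (by positivity)]
        linarith [h7]
      calc 2 * (v^a)⁻¹ = 2/v^a := by ring
      _ ≤ v^a/(2*v) := e
    have h9 : v ^ a + v ^ a/(2*v) ≤ (v+2) ^ a := by
      have h34 := le_trans h3 h4
      have := mul_le_mul_of_nonneg_left h34 hPpos.le
      calc v ^ a + v ^ a/(2*v) = v ^ a * (1 + 1/(2*v)) := by ring
      _ ≤ v ^ a * ((1+2/v) ^ a) := this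
      _ = (v+2)^a := h5
    linarith
  -- THE KEY INVARIANT
  have key : ∀ n : ℕ,
      2*b n ≤ (2*(n:ℝ)+1)^a - (2*(n:ℝ)+1)^(-a)
      ∧ s*(2*b n) + 2*b (n+1) ≤ (3*(2*(n:ℝ)+1))^a - (3*(2*(n:ℝ)+1))^(-a)
      ∧ 2*b n + s*(2*b (n+1)) ≤ (3*(2*(n:ℝ)+1))^a + (3*(2*(n:ℝ)+1))^(-a) := by
    intro n
    induction n using Nat.strong_induction_on with
    | _ n ih =>
      rcases lt_or_ge n 6 with h6 | h6
      · interval_cases n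
        · refine ⟨?_, ?_, ?_⟩
          · norm_num [hb0]
          · norm_num [hb0, hb1]
            rw [h3a, h3na]; linarith
          · norm_num [hb0, hb1]
            rw [h3a, h3na]; linarith
        · refine ⟨?_, ?_, ?_⟩
          · norm_num [hb1]
            rw [h3a, h3na]; linarith
          · norm_num [hb1, hb2]
            rw [h9a, h9na]; nlinarith only [hss]
          · norm_num [hb1, hb2]
            rw [h9a, h9na]; nlinarith only [hss]
        · refine ⟨?_, ?_, ?_⟩
          · norm_num [hb2]
            linarith only [h5a, h5n, hsub]
          · norm_num [hb2, hb3]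
            nlinarith only [hss, h15a, h15n]
          · norm_num [hb2, hb3]
            linarith only [h15a, hsub, (hrnpos 15 (by norm_num)).le]
        · refine ⟨?_, ?_, ?_⟩
          · norm_num [hb3]
            linarith only [h7a, h7n]
          · norm_num [hb3, hb4]
            linarith only [h21a, h21n, hsub]
          · norm_num [hb3, hb4]
            nlinarith only [hss, h21a, (hrnpos 21 (by norm_num)).le]
        · refine ⟨?_, ?_, ?_⟩
          · norm_num [hb4]
            rw [h9a, h9na]; nlinarith only [hss]
          · norm_num [hb4, hb5]
            rw [h27a, h27na]; nlinarith only [hss]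
          · norm_num [hb4, hb5]
            rw [h27a, h27na]
            have hs3 : s*(s*s) = s*2 := by rw [hss]
            nlinarith only [hss, hs3]
        · refine ⟨?_, ?_, ?_⟩
          · norm_num [hb5]
            linarith only [h11a, h11n]
          · norm_num [hb5, hb6]
            linarith only [h33a, h33n, hsub]
          · norm_num [hb5, hb6]
            nlinarith only [hss, h33a, (hrnpos 33 (by norm_num)).le]
      · -- inductive step
        obtain ⟨q, r, hrlt, rfl⟩ : ∃ q r, r < 3 ∧ n = 3*q + r :=
          ⟨n/3, n%3, Nat.mod_lt _ (by norm_num), (Nat.div_add_mod n 3).symm⟩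
        have hq2 : 2 ≤ q := by omega
        obtain ⟨Aq, Bq, Cq⟩ := ih q (by omega)
        have Aq1 := (ih (q+1) (by omega)).1
        obtain ⟨U, hUdef⟩ : ∃ U : ℝ, U = 2*(q:ℝ)+1 := ⟨_, rfl⟩
        rw [← hUdef] at Aq Bq Cq
        have hU5 : (5:ℝ) ≤ U := by
          have h : (2:ℝ) ≤ (q:ℝ) := by exact_mod_cast hq2
          rw [hUdef]; linarith only [h]
        have hU1 : (1:ℝ) ≤ U := by linarith only [hU5]
        have hU0 : (0:ℝ) < U := by linarith only [hU5]
        have eAq1 : 2*((q+1:ℕ):ℝ)+1 = U+2 := by rw [hUdef]; push_cast; ring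
        rw [eAq1] at Aq1
        have h3U15 : (15:ℝ) ≤ 3*U := by linarith only [hU5]
        have hUa3 : (3:ℝ) ≤ U^a := by
          apply hnum U 3 (by norm_num) hU1
          calc (3:ℝ)^5 = 243 := by norm_num
          _ ≤ 625 := by norm_num
          _ = 5^4 := by norm_num
          _ ≤ U^4 := pow_le_pow_left₀ (by norm_num) hU5 4
        have hP3U : (3*U)^a = (s+1)*U^a := hmul3 U hU0.le
        have hQ3U : (3*U)^(-a) = (s-1)*U^(-a) := hmul3n U hU0.le
        have hUinv0 : (0:ℝ) < U^(-a) := hrnpos U hU0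
        have hQ3pos : (0:ℝ) < (3*U)^(-a) := hrnpos _ (by linarith only [hU0])
        have h3U8 : (8:ℝ) ≤ (3*U)^a := by
          apply hnum (3*U) 8 (by norm_num) (by linarith only [h3U15])
          calc (8:ℝ)^5 = 32768 := by norm_num
          _ ≤ 50625 := by norm_num
          _ = 15^4 := by norm_num
          _ ≤ (3*U)^4 := pow_le_pow_left₀ (by norm_num) h3U15 4
        have h3Un : (3*U)^(-a) ≤ 8⁻¹ := hinvle (3*U) 8 (by linarith only [hU0]) (by norm_num) h3U8
        have hsUa_ub : s*U^a ≤ 1.415*U^a :=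
          mul_le_mul_of_nonneg_right hsub (by positivity)
        have hsUa_lb : 1.414*U^a ≤ s*U^a :=
          mul_le_mul_of_nonneg_right hslb (by positivity)
        interval_cases r
        · -- n = 3q
          simp only [Nat.add_zero]
          rw [hrec0 q, hrec1 q]
          have e1 : 2*((3*q:ℕ):ℝ)+1 = 3*U - 2 := by rw [hUdef]; push_cast; ring
          rw [e1]
          have e2 : (3:ℝ)*(3*U - 2) = 9*U - 6 := by ring
          rw [e2]
          have h76 : (7:ℝ)*U ≤ 9*U - 6 := by linarith only [hU5]
          have hc1 : (7*U)^a ≤ (9*U-6)^a := Real.rpow_le_rpow (by linarith only [hU0]) h76 ha0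
          have hc2 : ((7:ℝ)*U)^a = 7^a * U^a := Real.mul_rpow (by norm_num) hU0.le
          have hc3 : (9*U-6)^(-a) ≤ 1 := hle1 _ (by linarith only [hU5])
          have hc3' : (0:ℝ) < (9*U-6)^(-a) := hrnpos _ (by linarith only [hU5])
          have h7U : (237/50)*U^a ≤ 7^a*U^a :=
            mul_le_mul_of_nonneg_right h7a (by positivity)
          refine ⟨?_, ?_, ?_⟩
          · exact le_trans Aq (hmono U (3*U-2) hU1 (by linarith only [hU1]))
          · have hsA := mul_le_mul_of_nonneg_left Aq hs1
            linarith only [hsA, Bq, hP3U, hc1, hc2, hc3, h7U, hUa3, hsUa_ub,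
              mul_nonneg hs1 hUinv0.le, hQ3pos]
          · have expand : 2*b q + s*(2*(s*b q + b (q+1)))
                = 2*(2*b q) + (2*b q + s*(2*b (q+1))) := by
              linear_combination (2*b q)*hss
            rw [expand]
            have hd : (3*U)^(-a) ≤ U^(-a) := hanti U (3*U) hU0 (by linarith)
            linarith only [Aq, Cq, hP3U, hc1, hc2, hc3', h7U, hUa3, hsUa_ub, hd,
              hUinv0]
        · -- n = 3q+1
          rw [show 3*q+1+1 = 3*q+2 from by omega, hrec1 q, hrec2 q]
          have e1 : 2*((3*q+1:ℕ):ℝ)+1 = 3*U := by rw [hUdef]; push_cast; ring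
          rw [e1]
          have h9U : ((3:ℝ)*(3*U))^a = (s+1)*((3*U)^a) := hmul3 (3*U) (by linarith only [hU0])
          have h9Un : ((3:ℝ)*(3*U))^(-a) = (s-1)*((3*U)^(-a)) := hmul3n (3*U) (by linarith only [hU0])
          refine ⟨?_, ?_, ?_⟩
          · linarith only [Bq]
          · rw [h9U, h9Un]
            have hsB := mul_le_mul_of_nonneg_left Bq hs1
            linarith only [hsB, Cq]
          · rw [h9U, h9Un]
            have hsC := mul_le_mul_of_nonneg_left Cq hs1
            linarith only [Bq, hsC]
        · -- n = 3q+2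
          rw [show 3*q+2+1 = 3*(q+1) from by omega, hrec2 q, hrec0 (q+1)]
          have e1 : 2*((3*q+2:ℕ):ℝ)+1 = 3*U+2 := by rw [hUdef]; push_cast; ring
          rw [e1]
          have hv := hvlem (3*U) h3U15
          have e3 : (3:ℝ)*(3*U+2) = 9*U+6 := by ring
          rw [e3]
          have h9Ua : ((9:ℝ)*U)^a = (s+1)*((3*U)^a) := by
            rw [show (9:ℝ)*U = 3*(3*U) by ring, hmul3 (3*U) (by linarith only [hU0])]
          have h96a : ((9:ℝ)*U)^a ≤ (9*U+6)^a :=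
            Real.rpow_le_rpow (by linarith only [hU0]) (by linarith only []) ha0
          have h96n : (9*U+6)^(-a) ≤ 1 := hle1 _ (by linarith only [hU5])
          have h96n' : (0:ℝ) < (9*U+6)^(-a) := hrnpos _ (by linarith only [hU5])
          have hPP : (s+1)*((3*U)^a) = 3*U^a + 2*(s*U^a) := by
            rw [hP3U]; linear_combination (U^a)*hss
          have hU2a : (U+2)^a ≤ (7/5)*U^a := by
            have c1 : (U+2)^a ≤ ((7/5)*U)^a :=
              Real.rpow_le_rpow (by linarith only [hU0]) (by linarith only [hU5]) ha0
            have c2 : ((7/5:ℝ)*U)^a = (7/5:ℝ)^a * U^a := Real.mul_rpow (by norm_num) hU0.le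
            have c3 : (7/5:ℝ)^a ≤ 7/5 := hta _ (by norm_num)
            have c4 : (7/5:ℝ)^a * U^a ≤ (7/5)*U^a :=
              mul_le_mul_of_nonneg_right c3 (by positivity)
            linarith only [c1, c2.le, c2.ge, c4]
          have hU2n : (0:ℝ) < (U+2)^(-a) := hrnpos _ (by linarith only [hU0])
          have hsP : s*((3*U)^a) = 2*U^a + s*U^a := by
            rw [hP3U]; linear_combination (U^a)*hss
          have hsQ : s*((3*U)^(-a)) ≤ 1.415*8⁻¹ :=
            mul_le_mul hsub h3Un hQ3pos.le (by norm_num)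
          refine ⟨?_, ?_, ?_⟩
          · linarith only [Cq, hv]
          · have hsC := mul_le_mul_of_nonneg_left Cq hs1
            linarith only [hsC, Aq1, hsP, hsQ, hPP, h9Ua, h96a, h96n, hU2a,
              hsUa_lb, hUa3, hU2n, hQ3pos]
          · have hsA1 := mul_le_mul_of_nonneg_left Aq1 hs1
            have hsU2 : s*((U+2)^a) ≤ (7/5)*(s*U^a) := by
              have := mul_le_mul_of_nonneg_left hU2a hs1
              linarith only [this]
            linarith only [Cq, hsA1, hsU2, hP3U, hPP, h9Ua, h96a, h96n', hsUa_ub,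
              hUa3, h3Un, hQ3pos, mul_nonneg hs1 hU2n.le]
  -- upper bound facts
  have hFnonneg : ∀ n : ℕ, 0 ≤ 2 * b n / (2*(n:ℝ)) ^ a := by
    intro n
    exact div_nonneg (by linarith only [hbnn n]) (Real.rpow_nonneg (by positivity) a)
  have hFle : ∀ n : ℕ, 1 ≤ n → 2 * b n / (2*(n:ℝ)) ^ a ≤ 1 + 1/(2*(n:ℝ)) := by
    intro n hn
    have hn1 : (1:ℝ) ≤ (n:ℝ) := by exact_mod_cast hn
    have hd : (0:ℝ) < (2*(n:ℝ))^a := hrpos _ (by linarith only [hn1])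
    have h1 : 2*b n ≤ (2*(n:ℝ)+1)^a := by
      have hp := hrnpos (2*(n:ℝ)+1) (by linarith only [hn1])
      linarith only [(key n).1, hp]
    have h2 : 2*b n / (2*(n:ℝ))^a ≤ (2*(n:ℝ)+1)^a / (2*(n:ℝ))^a :=
      (div_le_div_iff_of_pos_right hd).2 h1
    have h3 : (2*(n:ℝ)+1)^a / (2*(n:ℝ))^a = ((2*(n:ℝ)+1)/(2*(n:ℝ)))^a :=
      (Real.div_rpow (by linarith only [hn1]) (by linarith only [hn1]) a).symm
    have h4 : ((2*(n:ℝ)+1)/(2*(n:ℝ)))^a ≤ (2*(n:ℝ)+1)/(2*(n:ℝ)) := by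
      apply hta
      rw [le_div_iff₀ (by linarith only [hn1])]
      linarith only [hn1]
    have h5 : (2*(n:ℝ)+1)/(2*(n:ℝ)) = 1 + 1/(2*(n:ℝ)) := by
      field_simp
    linarith only [h2, h3.le, h3.ge, h4, h5.le, h5.ge]
  have hFbound : ∀ n : ℕ, 2 * b n / (2*(n:ℝ)) ^ a ≤ 2 := by
    intro n
    cases n with
    | zero => norm_num [hb0]
    | succ m =>
      have h := hFle (m+1) (by omega)
      have h2 : 1/(2*((m+1:ℕ):ℝ)) ≤ 1/2 := by
        apply one_div_le_one_div_of_le (by norm_num)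
        push_cast
        have : (0:ℝ) ≤ (m:ℝ) := by positivity
        linarith only [this]
      linarith only [h, h2]
  have hbddAbove : IsBoundedUnder (· ≤ ·) atTop
      (fun n : ℕ => 2 * b n / (2*(n:ℝ)) ^ a) :=
    isBoundedUnder_of ⟨2, fun n => hFbound n⟩
  have hcob : IsCoboundedUnder (· ≤ ·) atTop
      (fun n : ℕ => 2 * b n / (2*(n:ℝ)) ^ a) :=
    IsBoundedUnder.isCoboundedUnder_le (isBoundedUnder_of ⟨0, fun n => hFnonneg n⟩)
  have hupper : limsup (fun n : ℕ => 2 * b n / (2*(n:ℝ)) ^ a) atTop ≤ 1 := by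
    apply le_of_forall_pos_le_add
    intro ε hε
    apply Filter.limsup_le_of_le hcob
    obtain ⟨N, hN⟩ := exists_nat_gt (1/ε)
    filter_upwards [eventually_ge_atTop (N+1)] with n hn
    have hn1 : 1 ≤ n := by omega
    have h1 := hFle n hn1
    have hNn : ((N:ℝ)+1) ≤ (n:ℝ) := by exact_mod_cast hn
    have hN0 : (0:ℝ) ≤ (N:ℝ) := by positivity
    have hrecip : 1/(2*(n:ℝ)) ≤ ε := by
      rw [div_le_iff₀ (by linarith only [hNn, hN0])]
      rw [div_lt_iff₀ hε] at hN
      nlinarith only [hN, hε, hNn, hN0]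
    linarith only [h1, hrecip]
  -- lower bound along E3
  have hψφ : (s-1)*(s+1) = 1 := by linear_combination hss
  have hEb : ∀ k : ℕ, 2*b (E3 k) = (s+1)^k - (s-1)^k
      ∧ 2*b (E3 k + 1) = (s+1)^k + (s-1)^k := by
    intro k
    induction k with
    | zero => constructor <;> norm_num [E3, hb0, hb1]
    | succ k ih =>
      obtain ⟨ih1, ih2⟩ := ih
      constructor
      · simp only [E3]
        rw [hrec1 (E3 k)]
        linear_combination s*ih1 + ih2
      · simp only [E3]
        rw [show 3*E3 k + 1 + 1 = 3*E3 k + 2 from by omega, hrec2 (E3 k)]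
        linear_combination ih1 + s*ih2
  have hψsq_lt : (s-1)^2 < 1 := by nlinarith only [hss, hslb, hsub]
  have hlow : ∀ k : ℕ, 1 ≤ k →
      1 - ((s-1)^2)^k ≤ 2*b (E3 k) / (2*((E3 k : ℕ):ℝ))^a := by
    intro k hk
    have hnum_eq := (hEb k).1
    have hd_eq : 2*((E3 k : ℕ):ℝ) = 3^k - 1 := by
      have h := E3_pow k
      have h2 : ((2 * E3 k + 1 : ℕ):ℝ) = ((3^k : ℕ):ℝ) := by rw [h]
      push_cast at h2
      linarith only [h2]
    have h3k : (3:ℝ) ≤ (3:ℝ)^(k:ℕ) := by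
      calc (3:ℝ) = 3^1 := (pow_one 3).symm
      _ ≤ 3^k := pow_le_pow_right₀ (by norm_num) hk
    have hd_pos : (0:ℝ) < 2*((E3 k : ℕ):ℝ) := by rw [hd_eq]; linarith only [h3k]
    have hda_pos : 0 < (2*((E3 k : ℕ):ℝ))^a := hrpos _ hd_pos
    have hphik_pos : (0:ℝ) < (s+1)^k := by positivity
    have hdle : (2*((E3 k : ℕ):ℝ))^a ≤ (s+1)^k := by
      have e1 : (2*((E3 k : ℕ):ℝ))^a ≤ ((3:ℝ)^(k:ℕ))^a := by
        apply Real.rpow_le_rpow hd_pos.le _ ha0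
        rw [hd_eq]; linarith only []
      have e2 : ((3:ℝ)^(k:ℕ))^a = (s+1)^k := by
        calc ((3:ℝ)^(k:ℕ))^a = ((3:ℝ)^((k:ℕ):ℝ))^a := by rw [Real.rpow_natCast]
        _ = (3:ℝ)^(((k:ℕ):ℝ)*a) := by rw [← Real.rpow_mul (by norm_num)]
        _ = (3:ℝ)^(a*((k:ℕ):ℝ)) := by rw [mul_comm ((k:ℕ):ℝ) a]
        _ = ((3:ℝ)^a)^((k:ℕ):ℝ) := Real.rpow_mul (by norm_num) a _
        _ = (s+1)^((k:ℕ):ℝ) := by rw [h3a]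
        _ = (s+1)^(k:ℕ) := Real.rpow_natCast _ k
      linarith only [e1, e2.le]
    have hnn : (0:ℝ) ≤ (s+1)^k - (s-1)^k := by
      have h := pow_le_pow_left₀ (by linarith only [hslb]) (by linarith only [] : s-1 ≤ s+1) k
      linarith only [h]
    have heq : 1 - ((s-1)^2)^k = ((s+1)^k - (s-1)^k)/((s+1)^k) := by
      rw [eq_div_iff (ne_of_gt hphik_pos)]
      have e : ((s-1)^2)^k * (s+1)^k = (s-1)^k := by
        calc ((s-1)^2)^k * (s+1)^k = ((s-1)^2*(s+1))^k := (mul_pow _ _ k).symm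
        _ = (s-1)^k := by
            rw [show (s-1)^2*(s+1) = s-1 from by linear_combination (s-1)*hψφ]
      linear_combination -e
    rw [heq, hnum_eq]
    exact div_le_div_of_nonneg_left hnn hda_pos hdle
  have hlower : 1 ≤ limsup (fun n : ℕ => 2 * b n / (2*(n:ℝ)) ^ a) atTop := by
    apply le_of_forall_pos_le_add
    intro ε hε
    have hfr : ∃ᶠ n in atTop, 1 - ε ≤ 2*b n/(2*(n:ℝ))^a := by
      rw [Filter.frequently_atTop]
      intro N
      have htend : Tendsto (fun k : ℕ => ((s-1)^2)^k) atTop (𝓝 0) :=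
        tendsto_pow_atTop_nhds_zero_of_lt_one (sq_nonneg _) hψsq_lt
      have hev : ∀ᶠ k : ℕ in atTop, ((s-1)^2)^k < ε := htend.eventually_lt_const hε
      obtain ⟨k, hk1, hk2⟩ := (hev.and (eventually_ge_atTop (max N 1))).exists
      refine ⟨E3 k, le_trans (le_trans (le_max_left N 1) hk2) (E3_ge k), ?_⟩
      have hlk := hlow k (le_trans (le_max_right N 1) hk2)
      linarith only [hlk, hk1]
    have h := Filter.le_limsup_of_frequently_le hfr hbddAbove
    linarith only [h]
  exact le_antisymm hupper hlower
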